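/- arXiv:2112.07291 — 5 statements merged into one kernel-verified Lean document; each statement's English description precedes it below -/
import Mathlib

section
/- For all even integers n and all real r, the derivative in r of α(n, 1/2 + ir) = ∏_{k=0}^{|n|/2-1} (1/2 - ir + k)/(1/2 + ir + k) satisfies |d/dr α(n, 1/2 + ir)| ≪ 1 + log(1 + |n|/2), with an absolute implied constant. -/
/-!
Each factor `(a - ir)/(a + ir)`, `a = k + 1/2`, has modulus one, so by the product rule the
derivative of the product is bounded by the sum of the moduli of the derivatives of the factors.
The `k`-th of these is `2a/(a² + r²) ≤ 2/a = 4/(2k + 1)`, and summing over `k < |n|/2` gives at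
most four times a harmonic number, which is `≤ 1 + log`.
-/

open Complex Finset

theorem norm_deriv_finsetProd_le {𝕜 𝔸 ι : Type*} [NontriviallyNormedField 𝕜] [NormedCommRing 𝔸]
    [NormOneClass 𝔸] [NormedAlgebra 𝕜 𝔸] [DecidableEq ι] {s : Finset ι} {f : ι → 𝕜 → 𝔸}
    {f' : ι → 𝔸} {x : 𝕜} (hf : ∀ i ∈ s, HasDerivAt (f i) (f' i) x)
    (hf_le : ∀ i ∈ s, ‖f i x‖ ≤ 1) :
    ‖deriv (fun y => ∏ i ∈ s, f i y) x‖ ≤ ∑ i ∈ s, ‖f' i‖ := by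
  rw [(HasDerivAt.fun_finsetProd hf).deriv]
  refine (norm_sum_le _ _).trans (sum_le_sum fun i _ => ?_)
  have hprod : ‖∏ j ∈ s.erase i, f j x‖ ≤ 1 :=
    (Finset.norm_prod_le _ _).trans <| prod_le_one (fun _ _ => norm_nonneg _)
      fun j hj => hf_le j (mem_of_mem_erase hj)
  calc ‖(∏ j ∈ s.erase i, f j x) • f' i‖ ≤ ‖∏ j ∈ s.erase i, f j x‖ * ‖f' i‖ := norm_smul_le _ _
    _ ≤ ‖f' i‖ := mul_le_of_le_one_left (norm_nonneg _) hprod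

section CayleyFactor

variable {a : ℝ} (r : ℝ)

theorem ofReal_add_mul_I_ne_zero (ha : a ≠ 0) : (a : ℂ) + r * I ≠ 0 := fun h => ha <| by
  simpa using congrArg re h

theorem hasDerivAt_sub_mul_I_div_add_mul_I (ha : a ≠ 0) :
    HasDerivAt (fun r : ℝ => ((a : ℂ) - r * I) / (a + r * I)) (-2 * a * I / (a + r * I) ^ 2) r := by
  have hrI : HasDerivAt (fun r : ℝ => (r : ℂ) * I) I r := by
    simpa using (hasDerivAt_id r).ofReal_comp.mul_const I
  exact ((hrI.const_sub (a : ℂ)).div (hrI.const_add (a : ℂ))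
    (ofReal_add_mul_I_ne_zero r ha)).congr_deriv (by ring)

theorem norm_sub_mul_I_div_add_mul_I (ha : a ≠ 0) : ‖((a : ℂ) - r * I) / (a + r * I)‖ = 1 := by
  have hconj : (a : ℂ) - r * I = starRingEnd ℂ (a + r * I) := by simp [sub_eq_add_neg]
  rw [norm_div, hconj, norm_conj, div_self (norm_ne_zero_iff.mpr (ofReal_add_mul_I_ne_zero r ha))]

theorem norm_mul_I_div_add_mul_I_sq_le (ha : a ≠ 0) :
    ‖-2 * a * I / (a + r * I) ^ 2‖ ≤ 2 / |a| := by
  have hsq : ‖(a : ℂ) + r * I‖ ^ 2 = a ^ 2 + r ^ 2 := by rw [Complex.sq_norm, normSq_add_mul_I]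
  rw [norm_div, norm_pow, hsq, div_le_div_iff₀ (by positivity) (abs_pos.mpr ha)]
  simp only [norm_mul, norm_neg, norm_ofNat, norm_real, Real.norm_eq_abs, norm_I, mul_one]
  nlinarith [sq_abs a, sq_nonneg r, abs_nonneg a]

end CayleyFactor

theorem sum_range_two_div_add_half_le_four_mul_harmonic (N : ℕ) :
    ∑ k ∈ range N, 2 / ((k : ℝ) + 1 / 2) ≤ 4 * harmonic N := by
  simp only [harmonic, Rat.cast_sum, Rat.cast_inv, Rat.cast_natCast, mul_sum]
  gcongr with k
  rw [Nat.cast_succ, ← div_eq_mul_inv, div_le_div_iff₀ (by positivity) (by positivity)]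
  linarith [k.cast_nonneg (α := ℝ)]

/-- For all even integers `n` and all real `r`, the derivative in `r` of
`α(n, 1/2 + ir) = ∏_{k=0}^{|n|/2-1} (1/2 - ir + k)/(1/2 + ir + k)` satisfies
`|d/dr α(n, 1/2 + ir)| ≪ 1 + log(1 + |n|/2)` with an absolute implied constant. -/
theorem stmt_1 : ∃ C : ℝ, 0 < C ∧ ∀ (n : ℤ), Even n → ∀ r : ℝ,
    ‖deriv (fun r : ℝ =>
        ∏ k ∈ Finset.range (n.natAbs / 2),
          ((1/2 - (r : ℂ) * I + (k : ℂ)) / (1/2 + (r : ℂ) * I + (k : ℂ)))) r‖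
      ≤ C * (1 + Real.log (1 + (n.natAbs : ℝ) / 2)) := by
  refine ⟨4, four_pos, fun n _ r => ?_⟩
  set N := n.natAbs / 2
  have hfactor (k : ℕ) (r : ℝ) : (1/2 - (r : ℂ) * I + k) / (1/2 + r * I + k) =
      ((((k : ℝ) + 1/2 : ℝ) : ℂ) - r * I) / (((k : ℝ) + 1/2 : ℝ) + r * I) := by
    push_cast; ring
  have hpos (k : ℕ) : 0 < (k : ℝ) + 1/2 := by positivity
  have hlog : Real.log N ≤ Real.log (1 + (n.natAbs : ℝ) / 2) := by
    have hN : (N : ℝ) ≤ n.natAbs / 2 := by exact_mod_cast Nat.cast_div_le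
    rcases N.eq_zero_or_pos with h | h
    · rw [h, Nat.cast_zero, Real.log_zero]; exact Real.log_nonneg (by linarith)
    · exact Real.log_le_log (by exact_mod_cast h) (by linarith)
  simp only [hfactor]
  calc _ ≤ ∑ k ∈ range N, ‖-2 * (((k : ℝ) + 1/2 : ℝ) : ℂ) * I / (((k : ℝ) + 1/2 : ℝ) + r * I) ^ 2‖ :=
        norm_deriv_finsetProd_le (fun k _ => hasDerivAt_sub_mul_I_div_add_mul_I r (hpos k).ne')
          fun k _ => (norm_sub_mul_I_div_add_mul_I r (hpos k).ne').le
    _ ≤ ∑ k ∈ range N, 2 / ((k : ℝ) + 1/2) := sum_le_sum fun k _ => by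
        simpa only [abs_of_pos (hpos k)] using norm_mul_I_div_add_mul_I_sq_le r (hpos k).ne'
    _ ≤ 4 * harmonic N := sum_range_two_div_add_half_le_four_mul_harmonic N
    _ ≤ 4 * (1 + Real.log (1 + (n.natAbs : ℝ) / 2)) := by
        linarith [harmonic_le_one_add_log N]
end

section
/- For a squarefree positive integer q, the sum ∑_{p | q} √p · log(p)/(p - 1) over prime divisors p of q is ≪ log(1 + q) with an absolute implied constant. -/
/-! Each summand is at most `2 log p`, since `√p ≤ p ≤ 2 (p - 1)` for `p ≥ 2`, and for squarefree `q`
the logarithms of the prime factors add up to `log q`. -/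

open Real

lemma Real.sqrt_div_sub_one_le_two {x : ℝ} (hx : 2 ≤ x) : √x / (x - 1) ≤ 2 := by
  have hsqrt : √x ≤ x := (sqrt_le_left (by linarith)).2 (by nlinarith)
  rw [div_le_iff₀ (by linarith)]
  linarith

lemma Nat.sum_primeFactors_log_of_squarefree {n : ℕ} (hn : Squarefree n) :
    ∑ p ∈ n.primeFactors, Real.log p = Real.log n := by
  rw [← log_prod fun p hp ↦ by exact_mod_cast (Nat.prime_of_mem_primeFactors hp).ne_zero,
    ← Nat.cast_prod, Nat.prod_primeFactors_of_squarefree hn]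

/-- For a squarefree positive integer `q`, `∑_{p | q} √p·log(p)/(p - 1) ≪ log(1 + q)`
with an absolute implied constant. -/
theorem stmt_5 : ∃ C : ℝ, 0 < C ∧ ∀ q : ℕ, 0 < q → Squarefree q →
    ∑ p ∈ q.primeFactors, Real.sqrt p * Real.log p / ((p : ℝ) - 1)
      ≤ C * Real.log (1 + (q : ℝ)) := by
  refine ⟨2, two_pos, fun q hq hsq ↦ ?_⟩
  have summand_le (p : ℕ) (hp : p ∈ q.primeFactors) :
      √p * log p / ((p : ℝ) - 1) ≤ 2 * log p := by
    have two_le : (2 : ℝ) ≤ p := by exact_mod_cast (Nat.prime_of_mem_primeFactors hp).two_le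
    rw [mul_div_right_comm]
    exact mul_le_mul_of_nonneg_right (sqrt_div_sub_one_le_two two_le) (log_nonneg (by linarith))
  calc _ ≤ ∑ p ∈ q.primeFactors, 2 * log p := Finset.sum_le_sum summand_le
    _ = 2 * log q := by rw [← Finset.mul_sum, Nat.sum_primeFactors_log_of_squarefree hsq]
    _ ≤ 2 * log (1 + q) := by gcongr; linarith [(Nat.cast_pos.2 hq : (0 : ℝ) < q)]
end

section
/- Let t be real with 0 < |t| ≤ 1, and let w be a complex number with |w| ≥ 1/2 and |w| ≤ 1. Then sup_{y ∈ [1, e]} |1 + w·y^{-2it}| ≥ |t|/3. -/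
open Complex

/-!
Put `E = exp(-2it)`, the value of `y^{-2it}` at `y = e`. Since `w (E - 1) = (1 + w E) - (1 + w)`,
the two values of the integrand at `y = 1` and `y = e` sum to at least `‖w‖ ‖E - 1‖ = 2 ‖w‖ |sin t|`,
and `sin x ≥ 2x/3` on `[0, 1]` makes this at least `2|t|/3`.
-/

namespace Real

lemma two_thirds_mul_le_sin {x : ℝ} (hx₀ : 0 ≤ x) (hx₁ : x ≤ 1) : 2 / 3 * x ≤ sin x := by
  rcases hx₀.eq_or_lt with rfl | hx₀
  · simp
  have hx₃ : x ^ 3 ≤ x := pow_le_of_le_one hx₀.le hx₁ (by norm_num)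
  linarith [sin_gt_sub_cube hx₀]

lemma two_thirds_mul_abs_le_abs_sin {x : ℝ} (hx : |x| ≤ 1) : 2 / 3 * |x| ≤ |sin x| := by
  wlog hx₀ : 0 ≤ x
  case inr => simpa using this (by rwa [abs_neg]) <| neg_nonneg.2 <| le_of_not_ge hx₀
  rw [abs_of_nonneg hx₀] at hx ⊢
  exact (two_thirds_mul_le_sin hx₀ hx).trans (le_abs_self _)

end Real

lemma Complex.two_thirds_mul_abs_le_norm_exp_I_mul_ofReal_sub_one {x : ℝ} (hx : |x| ≤ 2) :
    2 / 3 * |x| ≤ ‖exp (I * x) - 1‖ := by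
  have hsin := Real.two_thirds_mul_abs_le_abs_sin (x := x / 2) (by rw [abs_div, abs_two]; linarith)
  rw [norm_exp_I_mul_ofReal_sub_one, Real.norm_eq_abs, abs_mul, abs_div, abs_two] at *
  linarith

lemma norm_mul_sub_one_le {R : Type*} [SeminormedRing R] (w z : R) :
    ‖w * (z - 1)‖ ≤ ‖1 + w * z‖ + ‖1 + w‖ := by
  simpa [mul_sub, add_sub_add_left_eq_sub] using norm_sub_le (1 + w * z) (1 + w)

theorem stmt_8_general (t : ℝ) (ht1 : |t| ≤ 1) (w : ℂ)
    (hw1 : 1/2 ≤ ‖w‖) :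
    |t|/3 ≤ sSup ((fun y : ℝ =>
      ‖1 + w * Complex.exp (-(2 * t * Real.log y) * I)‖) ''
        Set.Icc 1 (Real.exp 1)) := by
  set S := (fun y : ℝ => ‖1 + w * Complex.exp (-(2 * t * Real.log y) * I)‖) ''
    Set.Icc 1 (Real.exp 1)
  have hbdd : BddAbove S := ⟨1 + ‖w‖, by
    rintro _ ⟨y, -, rfl⟩
    refine (norm_add_le _ _).trans ?_
    simp [Complex.norm_exp]⟩
  set E := exp (I * ↑(-2 * t))
  have h_at_one : ‖1 + w‖ ≤ sSup S :=
    le_csSup hbdd ⟨1, ⟨le_rfl, Real.one_le_exp zero_le_one⟩, by simp⟩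
  have h_at_e : ‖1 + w * E‖ ≤ sSup S :=
    le_csSup hbdd ⟨Real.exp 1, ⟨Real.one_le_exp zero_le_one, le_rfl⟩, by simp [E, mul_comm]⟩
  have hE : 2 / 3 * |-2 * t| ≤ ‖E - 1‖ :=
    two_thirds_mul_abs_le_norm_exp_I_mul_ofReal_sub_one (by rw [abs_mul, abs_neg, abs_two]; linarith)
  have hw : ‖w‖ * ‖E - 1‖ ≤ ‖1 + w * E‖ + ‖1 + w‖ := norm_mul w _ ▸ norm_mul_sub_one_le w E
  rw [abs_mul, abs_neg, abs_two] at hE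
  calc |t| / 3 = 1 / 2 * (2 / 3 * (2 * |t|)) / 2 := by ring
    _ ≤ ‖w‖ * ‖E - 1‖ / 2 := by gcongr
    _ ≤ (‖1 + w * E‖ + ‖1 + w‖) / 2 := by gcongr
    _ ≤ sSup S := by linarith

/-- Let `t` be real with `0 < |t| ≤ 1`, and `w` complex with `1/2 ≤ |w| ≤ 1`.
Then `sup_{y ∈ [1, e]} |1 + w·y^{-2it}| ≥ |t|/3`, where `y^{-2it} = exp(-2it log y)`. -/
theorem stmt_8 (t : ℝ) (ht0 : 0 < |t|) (ht1 : |t| ≤ 1) (w : ℂ)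
    (hw1 : 1/2 ≤ ‖w‖) (hw2 : ‖w‖ ≤ 1) :
    |t|/3 ≤ sSup ((fun y : ℝ =>
      ‖1 + w * Complex.exp (-(2 * t * Real.log y) * I)‖) ''
        Set.Icc 1 (Real.exp 1)) :=
  stmt_8_general t ht1 w hw1
end

section
/- Let t be real with |t| > 1 and w a complex number with |w| ≥ 1/2 and |w| ≤ 1. If T ≥ e^{2π}, then ∫_1^T |1 + w·y^{-2it}|² dy/y ≫ 1 with an absolute implied constant. -/
open Complex

/-!
Expanding the square, `‖1 + w y^{ic}‖² = 1 + ‖w‖² + 2 Re (w y^{ic})` when `c` is real. The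
constant part contributes `(1 + ‖w‖²) log T ≥ 2π`, while the oscillating part has the explicit
primitive `Re (w y^{ic} / (ic))`, which is bounded by `‖w‖ / |c| ≤ 1/2` for `c = -2t`.
-/

lemma norm_one_add_mul_sq (w : ℂ) {z : ℂ} (hz : ‖z‖ = 1) :
    ‖1 + w * z‖ ^ 2 = 1 + ‖w‖ ^ 2 + 2 * (w * z).re := by
  have hz' : normSq z = 1 := by rw [← Complex.sq_norm, hz, one_pow]
  simp only [Complex.sq_norm, normSq_add, normSq_mul, hz', normSq_one, one_mul, Complex.conj_re]
  ring

lemma norm_exp_ofReal_mul_ofReal_mul_I (c x : ℝ) : ‖exp (c * x * I)‖ = 1 := by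
  rw [← ofReal_mul, norm_exp_ofReal_mul_I]

lemma hasDerivAt_primitive_norm_one_add_mul_exp_sq (w : ℂ) {c : ℝ} (hc : c ≠ 0) {y : ℝ}
    (hy : 0 < y) :
    HasDerivAt (fun y : ℝ => (1 + ‖w‖ ^ 2) * Real.log y
        + 2 * (w * exp (c * Real.log y * I) / (c * I)).re)
      (‖1 + w * exp (c * Real.log y * I)‖ ^ 2 / y) y := by
  have hlog : HasDerivAt (fun y : ℝ => (Real.log y : ℂ)) ((y : ℂ)⁻¹) y := by
    simpa using (Real.hasDerivAt_log hy.ne').ofReal_comp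
  have hosc := (((((hlog.const_mul (c : ℂ)).mul_const I).cexp).const_mul w).div_const
    (c * I))
  refine (((Real.hasDerivAt_log hy.ne').const_mul (1 + ‖w‖ ^ 2)).add
    ((reCLM.hasFDerivAt.comp_hasDerivAt y hosc).const_mul 2)).congr_deriv ?_
  have hc' : (c : ℂ) ≠ 0 := ofReal_ne_zero.mpr hc
  have : w * (exp (c * Real.log y * I) * (c * (y : ℂ)⁻¹ * I)) / (c * I)
      = ((w * exp (c * Real.log y * I)) * ((y⁻¹ : ℝ) : ℂ)) := by
    push_cast; field_simp
  rw [norm_one_add_mul_sq w (norm_exp_ofReal_mul_ofReal_mul_I c _)]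
  simp only [reCLM_apply, this, re_mul_ofReal]
  field_simp

lemma integral_norm_one_add_mul_exp_sq_div (w : ℂ) {c : ℝ} (hc : c ≠ 0) {T : ℝ} (hT : 1 ≤ T) :
    ∫ y in (1 : ℝ)..T, ‖1 + w * exp (c * Real.log y * I)‖ ^ 2 / y
      = (1 + ‖w‖ ^ 2) * Real.log T
        + 2 * (w * (exp (c * Real.log T * I) - 1) / (c * I)).re := by
  have hpos : ∀ y ∈ Set.uIcc 1 T, 0 < y := fun y hy =>
    one_pos.trans_le (Set.uIcc_of_le hT ▸ hy).1
  have hcont : ContinuousOn (fun y : ℝ => ‖1 + w * exp (c * Real.log y * I)‖ ^ 2 / y)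
      (Set.uIcc 1 T) := by
    have := Real.continuousOn_log.mono (fun y hy => (hpos y hy).ne' : Set.uIcc 1 T ⊆ {0}ᶜ)
    exact ContinuousOn.div (by fun_prop) continuousOn_id fun y hy => (hpos y hy).ne'
  rw [intervalIntegral.integral_eq_sub_of_hasDerivAt
    (fun y hy => hasDerivAt_primitive_norm_one_add_mul_exp_sq w hc (hpos y hy))
    hcont.intervalIntegrable]
  simp only [Real.log_one, ofReal_zero, mul_zero, zero_mul, exp_zero, mul_sub, sub_div, sub_re,
    mul_one]
  ring

lemma le_integral_norm_one_add_mul_exp_sq_div (w : ℂ) {c : ℝ} (hc : c ≠ 0) {T : ℝ}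
    (hT : 1 ≤ T) :
    (1 + ‖w‖ ^ 2) * Real.log T - 4 * ‖w‖ / |c|
      ≤ ∫ y in (1 : ℝ)..T, ‖1 + w * exp (c * Real.log y * I)‖ ^ 2 / y := by
  rw [integral_norm_one_add_mul_exp_sq_div w hc hT]
  have hnorm : ‖w * (exp (c * Real.log T * I) - 1) / (c * I)‖ ≤ ‖w‖ * 2 / |c| := by
    have : ‖exp (c * Real.log T * I) - 1‖ ≤ 2 := by
      refine (norm_sub_le _ _).trans ?_
      rw [norm_exp_ofReal_mul_ofReal_mul_I, norm_one]
      norm_num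
    rw [norm_div, norm_mul, norm_mul, norm_I, mul_one, norm_real, Real.norm_eq_abs]
    gcongr
  have := (abs_le.mp ((abs_re_le_norm _).trans hnorm)).1
  have h4 : 4 * ‖w‖ / |c| = 2 * (‖w‖ * 2 / |c|) := by ring
  linarith

/-- Let `t` real with `|t| > 1` and `w` complex with `1/2 ≤ |w| ≤ 1`. If `T ≥ e^{2π}`,
then `∫_1^T |1 + w·y^{-2it}|² dy/y ≫ 1` with an absolute implied constant. -/
theorem stmt_11 : ∃ C : ℝ, 0 < C ∧ ∀ (t : ℝ) (w : ℂ) (T : ℝ),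
    1 < |t| → 1/2 ≤ ‖w‖ → ‖w‖ ≤ 1 → Real.exp (2*Real.pi) ≤ T →
    C ≤ ∫ y in (1:ℝ)..T,
        (‖1 + w * Complex.exp (-(2 * t * Real.log y) * I)‖)^2 / y := by
  refine ⟨1, one_pos, fun t w T ht _ hw hT => ?_⟩
  have hc : |-2 * t| = 2 * |t| := by rw [abs_mul]; norm_num
  have hc0 : -2 * t ≠ 0 := abs_pos.mp (by rw [hc]; linarith)
  have hT1 : 1 ≤ T := (Real.one_le_exp (by positivity)).trans hT
  have hlogT : 2 * Real.pi ≤ Real.log T := (Real.le_log_iff_exp_le (by linarith)).mpr hT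
  have hosc : 4 * ‖w‖ / |-2 * t| ≤ 2 := by
    rw [hc, div_le_iff₀ (by positivity)]
    linarith
  have hexp : ∀ y : ℝ, -(2 * (t : ℂ) * Real.log y) * I = ((-2 * t : ℝ) : ℂ) * Real.log y * I := by
    intro y; push_cast; ring
  simp_rw [hexp]
  have := le_integral_norm_one_add_mul_exp_sq_div w hc0 hT1
  nlinarith [Real.pi_gt_three, sq_nonneg ‖w‖]
end

section
/- For a squarefree positive integer q, define for each prime p dividing q the 2×2 matrix N_p(s) = (p^{2s} - 1)^{-1} · [[p - 1, p^s - p^{1-s}], [p^s - p^{1-s}, p - 1]]. Then for s = 1/2 + it with t real and t ≠ 0, each matrix N_p(1/2 + it) is unitary. -/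
open Complex

lemma unitary_aux (p u : ℂ) (hp0 : p ≠ 0) (hu0 : u ≠ 0) (hu1 : u^2 - 1 ≠ 0) (hup : p^2 - u^2 ≠ 0)
    (hcp : (starRingEnd ℂ) p = p) (hcu : (starRingEnd ℂ) u = p / u) :
    ((u^2 - 1)⁻¹ • !![p - 1, u - p/u; u - p/u, p - 1]) *
      star ((u^2 - 1)⁻¹ • !![p - 1, u - p/u; u - p/u, p - 1]) = 1 := by
  ext i j
  fin_cases i <;> fin_cases j <;>
    simp [Matrix.mul_apply, Fin.sum_univ_two, Matrix.one_apply, Matrix.star_apply,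
      Complex.star_def, hcu, hcp, map_sub, map_inv₀, map_div₀, map_pow, map_one] <;>
    field_simp <;>
    ring

/-- For a prime `p` and `s = 1/2 + it` with real `t ≠ 0`, the local scattering matrix
`N_p(s) = (p^{2s} - 1)⁻¹ · [[p - 1, p^s - p^{1-s}], [p^s - p^{1-s}, p - 1]]` is unitary. -/
theorem stmt_16 (p : ℕ) (hp : p.Prime) (t : ℝ) (ht : t ≠ 0) :
    (((p : ℂ) ^ (2 * (1/2 + (t : ℂ) * I)) - 1)⁻¹ •
      !![(p : ℂ) - 1, (p : ℂ) ^ ((1:ℂ)/2 + t * I) - (p : ℂ) ^ (1 - ((1:ℂ)/2 + t * I));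
         (p : ℂ) ^ ((1:ℂ)/2 + t * I) - (p : ℂ) ^ (1 - ((1:ℂ)/2 + t * I)), (p : ℂ) - 1])
      ∈ Matrix.unitaryGroup (Fin 2) ℂ := by
  set s : ℂ := (1:ℂ)/2 + t * I with hs
  set u : ℂ := (p:ℂ) ^ s with hu
  have hp0 : (p:ℂ) ≠ 0 := Nat.cast_ne_zero.mpr hp.pos.ne'
  have hppos : (0:ℝ) < p := by exact_mod_cast hp.pos
  have hre : (2 * s).re = 1 := by simp [hs]
  have habs2 : ‖(p:ℂ) ^ (2 * s)‖ = p := by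
    rw [show (p:ℂ) = ((p:ℝ):ℂ) by push_cast; ring,
      norm_cpow_eq_rpow_re_of_pos hppos]
    rw [show ((2 * s).re) = 1 from hre, Real.rpow_one]
  have h2 : (p:ℂ) ^ (2 * s) = u ^ 2 := by
    rw [two_mul, cpow_add _ _ hp0, sq]
  have h1s : (p:ℂ) ^ (1 - s) = p / u := by
    rw [cpow_sub _ _ hp0, cpow_one]
  have hu0 : u ≠ 0 := by
    intro h
    rw [h2, h] at habs2
    simp at habs2
    exact hp.pos.ne' (by exact_mod_cast habs2.symm)
  have hcs : (starRingEnd ℂ) s = 1 - s := by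
    simp [hs, Complex.ext_iff]
    norm_num
  have hconj0 : (starRingEnd ℂ) u = (p:ℂ) ^ (1 - s) := by
    have h := Complex.conj_cpow (p:ℂ) s (by rw [Complex.natCast_arg]; exact Real.pi_ne_zero.symm)
    rw [Complex.conj_natCast, hcs] at h
    rw [hu, h, Complex.conj_conj]
  have hconj : (starRingEnd ℂ) u = (p:ℂ) / u := by rw [hconj0, h1s]
  have hu1 : u ^ 2 - 1 ≠ 0 := by
    intro h
    rw [sub_eq_zero] at h
    rw [h2, h] at habs2
    simp at habs2
    exact hp.one_lt.ne' (by exact_mod_cast habs2.symm)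
  have hup : (p:ℂ)^2 - u ^ 2 ≠ 0 := by
    intro h
    rw [sub_eq_zero] at h
    have h3 : ‖(p:ℂ)^2‖ = p := by rw [h, ← h2, habs2]
    simp [map_pow] at h3
    have h4 : p^2 = p := by exact_mod_cast h3
    nlinarith [hp.two_le]
  rw [h2, h1s, Matrix.mem_unitaryGroup_iff]
  exact unitary_aux (p:ℂ) u hp0 hu0 hu1 hup (Complex.conj_natCast p) hconj
end
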